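/- For every monotone E3CNF formula φ with n variables and m clauses, the minimum number of tuples whose deletion from I_φ leaves an instance consistent with respect to Σ_{AB→C→B} = {AB → C, C → B} equals n + 3m − #τ_max(φ); equivalently, #τ_max(φ) = |I_φ| − opt(I_φ) − n. -/
import Mathlib


/-- A functional dependency `X → Y` is a pair of attribute sets; two tuples form a
`φ`-conflict if they agree on every attribute of `X` but differ on some attribute of `Y`. -/
def IsPhiConflict {α V : Type*} (X Y : Finset α) (s t : α → V) : Prop :=
  (∀ a ∈ X, s a = t a) ∧ (∃ a ∈ Y, s a ≠ t a)

instance {α V : Type*} [DecidableEq V] (X Y : Finset α) (s t : α → V) :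
    Decidable (IsPhiConflict X Y s t) := by
  unfold IsPhiConflict; infer_instance

/-- Two tuples form a conflict w.r.t. a finite FD set if they form a `φ`-conflict
for some FD `φ` of the set. -/
def IsConflict {α V : Type*} (FDs : Finset (Finset α × Finset α)) (s t : α → V) : Prop :=
  ∃ fd ∈ FDs, IsPhiConflict fd.1 fd.2 s t

instance {α V : Type*} [DecidableEq V] (FDs : Finset (Finset α × Finset α)) (s t : α → V) :
    Decidable (IsConflict FDs s t) := by
  unfold IsConflict; infer_instance

/-- A set of tuples is consistent w.r.t. an FD set if no two of its tuples form a conflict. -/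
def Consistent {α V : Type*} (FDs : Finset (Finset α × Finset α)) (J : Finset (α → V)) : Prop :=
  ∀ s ∈ J, ∀ t ∈ J, ¬ IsConflict FDs s t

/-- `opt FDs I` is the minimum of `dist(J,I) = |I| - |J|` over all consistent subsets `J ⊆ I`. -/
noncomputable def opt {α V : Type*} (FDs : Finset (Finset α × Finset α))
    (I : Finset (α → V)) : ℕ :=
  sInf {d : ℕ | ∃ J ⊆ I, Consistent FDs J ∧ d = I.card - J.card}

/-- A monotone E3CNF formula with `n` variables and `m` clauses: each clause has exactly
three literals over pairwise distinct variables and is monotone, i.e. all its literals have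
the same polarity `pol i` (`true` = all positive, `false` = all negative). -/
structure MonotoneE3CNF (n m : ℕ) where
  lit : Fin m → Fin 3 → Fin n
  pol : Fin m → Bool
  distinct : ∀ i, Function.Injective (lit i)

/-- The number of clauses satisfied by assignment `τ`. -/
def MonotoneE3CNF.numSat {n m : ℕ} (φ : MonotoneE3CNF n m) (τ : Fin n → Bool) : ℕ :=
  (Finset.univ.filter fun i : Fin m => ∃ k, τ (φ.lit i k) = φ.pol i).card

/-- `#τ_max(φ)`: the maximum number of simultaneously satisfiable clauses. -/
def MonotoneE3CNF.maxSat {n m : ℕ} (φ : MonotoneE3CNF n m) : ℕ :=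
  Finset.univ.sup fun τ : Fin n → Bool => φ.numSat τ

/-- Values used in the instance `I_φ`: clause constants `c_i`, variable constants `x_j`,
and the two Boolean values; all pairwise distinct. -/
abbrev Val2 (n m : ℕ) := Sum (Fin m) (Sum (Fin n) Bool)

/-- The two tuples `(x_j, 1, x_j)` and `(x_j, 0, x_j)` built for variable `x_j`. -/
def varTuple {n m : ℕ} (j : Fin n) (b : Bool) : Fin 3 → Val2 n m :=
  ![Sum.inr (Sum.inl j), Sum.inr (Sum.inr b), Sum.inr (Sum.inl j)]

/-- The tuple built for the `k`-th literal of clause `i`: `(c_i, 1, x_j)` if the variable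
`j = lit i k` occurs positively in clause `i`, `(c_i, 0, x_j)` if it occurs negatively. -/
def clauseTuple {n m : ℕ} (φ : MonotoneE3CNF n m) (i : Fin m) (k : Fin 3) : Fin 3 → Val2 n m :=
  ![Sum.inl i, Sum.inr (Sum.inr (φ.pol i)), Sum.inr (Sum.inl (φ.lit i k))]

/-- The instance `I_φ` over attributes `A = 0`, `B = 1`, `C = 2`. -/
def Iphi2 {n m : ℕ} (φ : MonotoneE3CNF n m) : Finset (Fin 3 → Val2 n m) :=
  (Finset.univ.image fun p : Fin n × Bool => varTuple p.1 p.2) ∪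
    (Finset.univ.image fun p : Fin m × Fin 3 => clauseTuple φ p.1 p.2)

/-- The FD set `Σ_{AB→C→B} = {AB → C, C → B}`. -/
def Sigma2 : Finset (Finset (Fin 3) × Finset (Fin 3)) := {({0, 1}, {2}), ({2}, {1})}

section
variable {n m : ℕ}

lemma conflict_iff (s t : Fin 3 → Val2 n m) :
    IsConflict Sigma2 s t ↔ (s 0 = t 0 ∧ s 1 = t 1 ∧ s 2 ≠ t 2) ∨ (s 2 = t 2 ∧ s 1 ≠ t 1) := by
  simp only [IsConflict, IsPhiConflict, Sigma2, Finset.mem_insert, Finset.mem_singleton]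
  constructor
  · rintro ⟨fd, hfd | hfd, h1, h2⟩ <;> subst hfd <;> simp_all
  · rintro (⟨h0, h1, h2⟩ | ⟨h2, h1⟩)
    · exact ⟨_, Or.inl rfl, by simp [h0, h1], ⟨2, by simp, h2⟩⟩
    · exact ⟨_, Or.inr rfl, by simp [h2], ⟨1, by simp, h1⟩⟩

@[simp] lemma varTuple_zero (j : Fin n) (b : Bool) : varTuple (m := m) j b 0 = Sum.inr (Sum.inl j) := rfl
@[simp] lemma varTuple_one (j : Fin n) (b : Bool) : varTuple (m := m) j b 1 = Sum.inr (Sum.inr b) := rfl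
@[simp] lemma varTuple_two (j : Fin n) (b : Bool) : varTuple (m := m) j b 2 = Sum.inr (Sum.inl j) := rfl
@[simp] lemma clauseTuple_zero (φ : MonotoneE3CNF n m) (i k) : clauseTuple φ i k 0 = Sum.inl i := rfl
@[simp] lemma clauseTuple_one (φ : MonotoneE3CNF n m) (i k) : clauseTuple φ i k 1 = Sum.inr (Sum.inr (φ.pol i)) := rfl
@[simp] lemma clauseTuple_two (φ : MonotoneE3CNF n m) (i k) : clauseTuple φ i k 2 = Sum.inr (Sum.inl (φ.lit i k)) := rfl

lemma mem_Iphi2 {φ : MonotoneE3CNF n m} {t : Fin 3 → Val2 n m} :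
    t ∈ Iphi2 φ ↔ (∃ j b, t = varTuple j b) ∨ ∃ i k, t = clauseTuple φ i k := by
  simp [Iphi2, eq_comm]

end
section
variable {n m : ℕ}

lemma varTuple_injective : Function.Injective (fun p : Fin n × Bool => varTuple (m := m) p.1 p.2) := by
  rintro ⟨j, b⟩ ⟨j', b'⟩ h
  have h0 := congrFun h 0
  have h1 := congrFun h 1
  simp_all [varTuple]

lemma clauseTuple_injective (φ : MonotoneE3CNF n m) :
    Function.Injective (fun p : Fin m × Fin 3 => clauseTuple φ p.1 p.2) := by
  rintro ⟨i, k⟩ ⟨i', k'⟩ h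
  have h0 := congrFun h 0
  have h2 := congrFun h 2
  simp only [clauseTuple, Matrix.cons_val_zero, Sum.inl.injEq] at h0
  subst h0
  simp only [clauseTuple] at h2
  have : φ.lit i k = φ.lit i k' := by simpa using h2
  have := φ.distinct i this
  simp_all

lemma varTuple_ne_clauseTuple (φ : MonotoneE3CNF n m) (j b i k) :
    varTuple j b ≠ clauseTuple φ i k := by
  intro h
  have := congrFun h 0
  simp [varTuple, clauseTuple] at this

lemma card_Iphi2 (φ : MonotoneE3CNF n m) : (Iphi2 φ).card = 2 * n + 3 * m := by
  rw [Iphi2, Finset.card_union_of_disjoint, Finset.card_image_of_injective _ varTuple_injective,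
    Finset.card_image_of_injective _ (clauseTuple_injective φ)]
  · simp [Fintype.card_prod, mul_comm]
  · rw [Finset.disjoint_left]
    rintro t ht ht'
    simp only [Finset.mem_image] at ht ht'
    obtain ⟨⟨j, b⟩, -, rfl⟩ := ht
    obtain ⟨⟨i, k⟩, -, h⟩ := ht'
    exact varTuple_ne_clauseTuple φ j b i k h.symm

end
section
variable {n m : ℕ}

noncomputable def pick (φ : MonotoneE3CNF n m) (τ : Fin n → Bool) (i : Fin m) : Fin 3 :=
  if h : ∃ k, τ (φ.lit i k) = φ.pol i then h.choose else 0

lemma pick_spec (φ : MonotoneE3CNF n m) (τ : Fin n → Bool) (i : Fin m)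
    (h : ∃ k, τ (φ.lit i k) = φ.pol i) : τ (φ.lit i (pick φ τ i)) = φ.pol i := by
  rw [pick, dif_pos h]; exact h.choose_spec

noncomputable def goodJ (φ : MonotoneE3CNF n m) (τ : Fin n → Bool) : Finset (Fin 3 → Val2 n m) :=
  (Finset.univ.image fun j => varTuple j (τ j)) ∪
  ((Finset.univ.filter fun i => ∃ k, τ (φ.lit i k) = φ.pol i).image
    fun i => clauseTuple φ i (pick φ τ i))

lemma goodJ_subset (φ : MonotoneE3CNF n m) (τ : Fin n → Bool) : goodJ φ τ ⊆ Iphi2 φ := by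
  intro t ht
  rw [mem_Iphi2]
  simp only [goodJ, Finset.mem_union, Finset.mem_image, Finset.mem_filter] at ht
  rcases ht with ⟨j, -, rfl⟩ | ⟨i, -, rfl⟩
  · exact Or.inl ⟨j, _, rfl⟩
  · exact Or.inr ⟨i, _, rfl⟩

lemma goodJ_card (φ : MonotoneE3CNF n m) (τ : Fin n → Bool) :
    (goodJ φ τ).card = n + φ.numSat τ := by
  have h1 : Set.InjOn (fun j => varTuple (m := m) j (τ j)) ↑(Finset.univ : Finset (Fin n)) := by
    intro j _ j' _ h
    simpa using congrFun h 0
  have h2 : Set.InjOn (fun i => clauseTuple φ i (pick φ τ i))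
      ↑(Finset.univ.filter fun i => ∃ k, τ (φ.lit i k) = φ.pol i) := by
    intro i _ i' _ h
    simpa using congrFun h 0
  have hdisj : Disjoint (Finset.univ.image fun j => varTuple (m := m) j (τ j))
      ((Finset.univ.filter fun i => ∃ k, τ (φ.lit i k) = φ.pol i).image
        fun i => clauseTuple φ i (pick φ τ i)) := by
    rw [Finset.disjoint_left]
    rintro t ht ht'
    simp only [Finset.mem_image, Finset.mem_filter] at ht ht'
    obtain ⟨j, -, rfl⟩ := ht
    obtain ⟨i, -, h⟩ := ht'
    exact varTuple_ne_clauseTuple φ j _ i _ h.symm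
  rw [goodJ, Finset.card_union_of_disjoint hdisj, Finset.card_image_of_injOn h1,
    Finset.card_image_of_injOn h2, Finset.card_univ, Fintype.card_fin, MonotoneE3CNF.numSat]

lemma goodJ_consistent (φ : MonotoneE3CNF n m) (τ : Fin n → Bool) :
    Consistent Sigma2 (goodJ φ τ) := by
  intro s hs t ht hc
  rw [conflict_iff] at hc
  simp only [goodJ, Finset.mem_union, Finset.mem_image, Finset.mem_filter] at hs ht
  rcases hs with ⟨j, -, rfl⟩ | ⟨i, ⟨-, hi⟩, rfl⟩ <;>
    rcases ht with ⟨j', -, rfl⟩ | ⟨i', ⟨-, hi'⟩, rfl⟩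
  · rcases hc with ⟨h0, -, h2⟩ | ⟨h2, h1⟩
    · simp only [varTuple_zero, Sum.inr.injEq, Sum.inl.injEq] at h0
      subst h0; simp at h2
    · simp only [varTuple_two, Sum.inr.injEq, Sum.inl.injEq] at h2
      subst h2; simp at h1
  · rcases hc with ⟨h0, -, -⟩ | ⟨h2, h1⟩
    · simp at h0
    · simp only [varTuple_two, clauseTuple_two, Sum.inr.injEq, Sum.inl.injEq] at h2
      subst h2
      exact h1 (by simp [pick_spec φ τ i' hi'])
  · rcases hc with ⟨h0, -, -⟩ | ⟨h2, h1⟩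
    · simp at h0
    · simp only [varTuple_two, clauseTuple_two, Sum.inr.injEq, Sum.inl.injEq] at h2
      exact h1 (by simp [← h2, pick_spec φ τ i hi])
  · rcases hc with ⟨h0, -, h2⟩ | ⟨h2, h1⟩
    · simp only [clauseTuple_zero, Sum.inl.injEq] at h0
      subst h0; simp at h2
    · simp only [clauseTuple_two, Sum.inr.injEq, Sum.inl.injEq] at h2
      have e1 : τ (φ.lit i (pick φ τ i)) = φ.pol i := pick_spec φ τ i hi
      have e2 : τ (φ.lit i' (pick φ τ i')) = φ.pol i' := pick_spec φ τ i' hi'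
      rw [h2, e2] at e1
      simp [e1] at h1

end
section
variable {n m : ℕ}

open Classical in
lemma card_le_of_consistent (φ : MonotoneE3CNF n m) (J : Finset (Fin 3 → Val2 n m))
    (hJI : J ⊆ Iphi2 φ) (hc : Consistent Sigma2 J) : J.card ≤ n + φ.maxSat := by
  classical
  set S : Finset (Fin m) := Finset.univ.filter (fun i => ∃ k, clauseTuple φ i k ∈ J) with hS
  -- Step 1 : S.card ≤ maxSat
  set τ : Fin n → Bool := fun j =>
    decide (∃ i k, clauseTuple φ i k ∈ J ∧ φ.lit i k = j ∧ φ.pol i = true) with hτ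
  have hsat : ∀ i ∈ S, ∃ k, τ (φ.lit i k) = φ.pol i := by
    intro i hi
    rw [hS, Finset.mem_filter] at hi
    obtain ⟨-, k, hk⟩ := hi
    refine ⟨k, ?_⟩
    cases hpol : φ.pol i with
    | true => simp only [hτ, decide_eq_true_eq]; exact ⟨i, k, hk, rfl, hpol⟩
    | false =>
      simp only [hτ, decide_eq_false_iff_not]
      rintro ⟨i', k', hk', hl, hp⟩
      refine hc _ hk _ hk' ?_
      rw [conflict_iff]
      right
      constructor
      · simp [hl]
      · simp [hpol, hp]
  have hScard : S.card ≤ φ.maxSat := by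
    calc S.card ≤ φ.numSat τ := by
          apply Finset.card_le_card
          intro i hi
          simp only [MonotoneE3CNF.numSat, Finset.mem_filter]
          exact ⟨Finset.mem_univ i, hsat i hi⟩
      _ ≤ φ.maxSat := Finset.le_sup (Finset.mem_univ τ)
  -- Step 2 : J.card ≤ n + S.card
  set g : (Fin 3 → Val2 n m) → Option (Sum (Fin n) (Fin m)) := fun t =>
    match t 0 with
    | Sum.inl i => some (Sum.inr i)
    | Sum.inr (Sum.inl j) => some (Sum.inl j)
    | Sum.inr (Sum.inr _) => none with hg
  have hginj : Set.InjOn g ↑J := by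
    intro s hs t ht hst
    rcases mem_Iphi2.mp (hJI hs) with ⟨j, b, rfl⟩ | ⟨i, k, rfl⟩ <;>
      rcases mem_Iphi2.mp (hJI ht) with ⟨j', b', rfl⟩ | ⟨i', k', rfl⟩
    · have : j = j' := by simpa [hg, varTuple] using hst
      subst this
      by_contra hne
      have hbb : b ≠ b' := fun h => hne (by rw [h])
      exact hc _ hs _ ht (by rw [conflict_iff]; exact Or.inr ⟨by simp, by simp [hbb]⟩)
    · simp [hg, varTuple, clauseTuple] at hst
    · simp [hg, varTuple, clauseTuple] at hst
    · have : i = i' := by simpa [hg, clauseTuple] using hst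
      subst this
      by_contra hne
      have hkk : k ≠ k' := fun h => hne (by rw [h])
      have hlit : φ.lit i k ≠ φ.lit i k' := fun h => hkk (φ.distinct i h)
      exact hc _ hs _ ht (by
        rw [conflict_iff]
        exact Or.inl ⟨rfl, rfl, by simp [hlit]⟩)
  have himg : J.image g ⊆ (Finset.univ.image fun j : Fin n => some (Sum.inl j)) ∪
      (S.image fun i => some (Sum.inr i)) := by
    intro x hx
    rw [Finset.mem_image] at hx
    obtain ⟨t, ht, rfl⟩ := hx
    rcases mem_Iphi2.mp (hJI ht) with ⟨j, b, rfl⟩ | ⟨i, k, rfl⟩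
    · exact Finset.mem_union_left _ (Finset.mem_image.mpr ⟨j, Finset.mem_univ j, by simp [hg, varTuple]⟩)
    · refine Finset.mem_union_right _ (Finset.mem_image.mpr ⟨i, ?_, by simp [hg, clauseTuple]⟩)
      rw [hS, Finset.mem_filter]
      exact ⟨Finset.mem_univ i, k, ht⟩
  have : J.card ≤ n + S.card := by
    calc J.card = (J.image g).card := (Finset.card_image_of_injOn hginj).symm
      _ ≤ _ := Finset.card_le_card himg
      _ ≤ (Finset.univ.image fun j : Fin n => some (Sum.inl j)).card
            + (S.image fun i => some (Sum.inr i)).card := Finset.card_union_le _ _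
      _ ≤ n + S.card := by
          gcongr
          · exact le_of_eq (by rw [Finset.card_image_of_injective _ (by intro a b h; simpa using h),
              Finset.card_univ, Fintype.card_fin])
          · exact Finset.card_image_le
  omega

lemma maxSat_le (φ : MonotoneE3CNF n m) : φ.maxSat ≤ m := by
  rw [MonotoneE3CNF.maxSat]
  apply Finset.sup_le
  intro τ _
  calc φ.numSat τ ≤ (Finset.univ : Finset (Fin m)).card := Finset.card_filter_le _ _
    _ = m := by simp

end
/-- For every monotone E3CNF formula `φ` with `n` variables and `m` clauses,
`opt(I_φ) = n + 3m − #τ_max(φ)` with respect to `Σ_{AB→C→B} = {AB → C, C → B}`. -/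
theorem stmt2 {n m : ℕ} (φ : MonotoneE3CNF n m) :
    opt Sigma2 (Iphi2 φ) = n + 3 * m - φ.maxSat := by
  obtain ⟨τ, -, hτ⟩ := Finset.exists_mem_eq_sup (Finset.univ : Finset (Fin n → Bool))
    Finset.univ_nonempty (fun τ => φ.numSat τ)
  have hm : φ.maxSat = φ.numSat τ := hτ
  have h3 := maxSat_le φ
  rw [opt]
  apply le_antisymm
  · apply Nat.sInf_le
    refine ⟨goodJ φ τ, goodJ_subset φ τ, goodJ_consistent φ τ, ?_⟩
    rw [card_Iphi2, goodJ_card]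
    omega
  · refine le_csInf ⟨(Iphi2 φ).card, ?_⟩ ?_
    · exact ⟨∅, Finset.empty_subset _, fun s hs => (Finset.notMem_empty s hs).elim, by simp⟩
    rintro d ⟨J, hJI, hcons, rfl⟩
    have h1 := card_le_of_consistent φ J hJI hcons
    have h2 := Finset.card_le_card hJI
    rw [card_Iphi2] at h2 ⊢
    omega
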